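/- arXiv:2112.04870 — 2 statements merged into one kernel-verified Lean document; each statement's English description precedes it below -/
import Mathlib

section
/- Let X be the stationary Ornstein–Uhlenbeck process with dX_t = −(1+κ)X_t dt + √2 dB_t (σ = 1), and define h(x,y) = Δ e^{−(1+κ)Δ} x² and ℓ(x,y) = x²(y² − e^{−2(1+κ)Δ} x²). Then (E[h(X_0,X_Δ)])^{-2} · E[ℓ(X_0,X_Δ)] = (e^{2(1+κ)Δ} − 1)/Δ². -/
/-!
Writing `X_Δ = a X₀ + ξ` with `a = e^{-(1+κ)Δ}`, the integrand of `E[ℓ]` is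
`2a X₀³ ξ + X₀² ξ²`. Independence factorises both expectations, and since `ξ` is centred only
`E[X₀²] E[ξ²] = v₀ v_ξ` survives; with `E[h] = Δ a v₀` the ratio is `v_ξ / (Δ² a² v₀)`,
which equals `(e^{2(1+κ)Δ} - 1)/Δ²`.
-/

open MeasureTheory ProbabilityTheory

namespace ProbabilityTheory

variable {Ω : Type*} {mΩ : MeasurableSpace Ω} {P : Measure Ω}

lemma integrable_pow_gaussianReal (m : ℝ) (v : NNReal) (n : ℕ) :
    Integrable (fun x : ℝ => x ^ n) (gaussianReal m v) :=
  integrable_pow_of_mem_interior_integrableExpSet (by simp) n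

lemma integral_sq_gaussianReal (m : ℝ) (v : NNReal) :
    ∫ x, x ^ 2 ∂gaussianReal m v = v + m ^ 2 := by
  have h := variance_eq_sub (memLp_id_gaussianReal (μ := m) (v := v) 2)
  simp only [variance_id_gaussianReal, integral_id_gaussianReal, Pi.pow_apply, id_eq] at h
  linarith

lemma HasLaw.integrable_pow_of_gaussianReal {X : Ω → ℝ} {m : ℝ} {v : NNReal}
    (hX : HasLaw X (gaussianReal m v) P) (n : ℕ) :
    Integrable (fun ω => X ω ^ n) P := by
  have h := integrable_pow_gaussianReal m v n
  rw [← hX.map_eq] at h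
  exact (integrable_map_measure (measurable_id.pow_const n).aestronglyMeasurable
    hX.aemeasurable).mp h

lemma HasLaw.integral_sq_of_gaussianReal {X : Ω → ℝ} {m : ℝ} {v : NNReal}
    (hX : HasLaw X (gaussianReal m v) P) :
    ∫ ω, X ω ^ 2 ∂P = v + m ^ 2 := by
  rw [← integral_sq_gaussianReal, ← hX.integral_comp (by fun_prop)]
  rfl

lemma HasLaw.integral_of_gaussianReal {X : Ω → ℝ} {m : ℝ} {v : NNReal}
    (hX : HasLaw X (gaussianReal m v) P) :
    ∫ ω, X ω ∂P = m := by
  rw [hX.integral_eq, integral_id_gaussianReal]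

lemma IndepFun.integral_sq_mul_sq_add_sub_sq {X ξ : Ω → ℝ} (hXξ : IndepFun X ξ P)
    (hX2 : Integrable (fun ω => X ω ^ 2) P) (hX3 : Integrable (fun ω => X ω ^ 3) P)
    (hξ : Integrable ξ P) (hξ2 : Integrable (fun ω => ξ ω ^ 2) P) (a : ℝ) :
    ∫ ω, X ω ^ 2 * ((a * X ω + ξ ω) ^ 2 - a ^ 2 * X ω ^ 2) ∂P
      = 2 * a * (∫ ω, X ω ^ 3 ∂P) * (∫ ω, ξ ω ∂P)
        + (∫ ω, X ω ^ 2 ∂P) * ∫ ω, ξ ω ^ 2 ∂P := by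
  have h31 : IndepFun (fun ω => X ω ^ 3) ξ P := hXξ.comp (measurable_id.pow_const 3) measurable_id
  have h22 : IndepFun (fun ω => X ω ^ 2) (fun ω => ξ ω ^ 2) P :=
    hXξ.comp (measurable_id.pow_const 2) (measurable_id.pow_const 2)
  have hI31 : Integrable (fun ω => X ω ^ 3 * ξ ω) P := h31.integrable_mul hX3 hξ
  have hI22 : Integrable (fun ω => X ω ^ 2 * ξ ω ^ 2) P := h22.integrable_mul hX2 hξ2
  calc ∫ ω, X ω ^ 2 * ((a * X ω + ξ ω) ^ 2 - a ^ 2 * X ω ^ 2) ∂P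
      = ∫ ω, 2 * a * (X ω ^ 3 * ξ ω) + X ω ^ 2 * ξ ω ^ 2 ∂P := by
        congr 1; funext ω; ring
    _ = 2 * a * (∫ ω, X ω ^ 3 * ξ ω ∂P) + ∫ ω, X ω ^ 2 * ξ ω ^ 2 ∂P := by
        rw [integral_add (hI31.const_mul _) hI22, integral_const_mul]
    _ = _ := by
        rw [h31.integral_fun_mul_eq_mul_integral hX3.1 hξ.1,
          h22.integral_fun_mul_eq_mul_integral hX2.1 hξ2.1]
        ring

end ProbabilityTheory

theorem stmt5_general {Ω : Type*} [MeasurableSpace Ω] (μ : Measure Ω) [IsProbabilityMeasure μ]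
    (κ Δ : ℝ) (hκ : -1 < κ)
    (X0 ξ : Ω → ℝ) (hmX0 : Measurable X0) (hmξ : Measurable ξ)
    (hindep : IndepFun X0 ξ μ)
    (v0 vξ : NNReal) (hv0 : (v0 : ℝ) = 1 / (1 + κ))
    (hvξ : (vξ : ℝ) = (1 - Real.exp (-2 * (1 + κ) * Δ)) / (1 + κ))
    (hX0law : μ.map X0 = gaussianReal 0 v0)
    (hξlaw : μ.map ξ = gaussianReal 0 vξ)
    (XΔ : Ω → ℝ) (hXΔ : ∀ ω, XΔ ω = Real.exp (-(1 + κ) * Δ) * X0 ω + ξ ω) :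
    ((∫ ω, Δ * Real.exp (-(1 + κ) * Δ) * (X0 ω) ^ 2 ∂μ) ^ 2)⁻¹ *
      ∫ ω, (X0 ω) ^ 2 * ((XΔ ω) ^ 2 - Real.exp (-2 * (1 + κ) * Δ) * (X0 ω) ^ 2) ∂μ
      = (Real.exp (2 * (1 + κ) * Δ) - 1) / Δ ^ 2 := by
  set a := Real.exp (-(1 + κ) * Δ)
  have ha2 : Real.exp (-2 * (1 + κ) * Δ) = a ^ 2 := by
    rw [← Real.exp_nat_mul]; ring_nf
  have ha2_inv : Real.exp (2 * (1 + κ) * Δ) = (a ^ 2)⁻¹ := by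
    rw [← ha2, ← Real.exp_neg]; ring_nf
  have hX0 : HasLaw X0 (gaussianReal 0 v0) μ := ⟨hmX0.aemeasurable, hX0law⟩
  have hξ : HasLaw ξ (gaussianReal 0 vξ) μ := ⟨hmξ.aemeasurable, hξlaw⟩
  have hnum := hindep.integral_sq_mul_sq_add_sub_sq (hX0.integrable_pow_of_gaussianReal 2)
    (hX0.integrable_pow_of_gaussianReal 3) (by simpa using hξ.integrable_pow_of_gaussianReal 1)
    (hξ.integrable_pow_of_gaussianReal 2) a
  rw [ha2] at hvξ
  simp_rw [hXΔ, ha2, hnum, integral_const_mul, hX0.integral_sq_of_gaussianReal,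
    hξ.integral_sq_of_gaussianReal, hξ.integral_of_gaussianReal, ha2_inv, hv0, hvξ]
  have h1κ : 1 + κ ≠ 0 := by linarith
  have ha : a ≠ 0 := (Real.exp_pos _).ne'
  field_simp
  ring

/-- Asymptotic variance of the eigenfunction estimator for the stationary OU process:
with X_0 ~ N(0, 1/(1+κ)), ξ ~ N(0, (1−e^{−2(1+κ)Δ})/(1+κ)) independent of X_0 and
X_Δ = e^{−(1+κ)Δ} X_0 + ξ, one has
(E[h(X_0,X_Δ)])⁻² · E[ℓ(X_0,X_Δ)] = (e^{2(1+κ)Δ} − 1)/Δ², where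
h(x,y) = Δ e^{−(1+κ)Δ} x² and ℓ(x,y) = x²(y² − e^{−2(1+κ)Δ} x²). -/
theorem stmt5 {Ω : Type*} [MeasurableSpace Ω] (μ : Measure Ω) [IsProbabilityMeasure μ]
    (κ Δ : ℝ) (hκ : -1 < κ) (hΔ : 0 < Δ)
    (X0 ξ : Ω → ℝ) (hmX0 : Measurable X0) (hmξ : Measurable ξ)
    (hindep : IndepFun X0 ξ μ)
    (v0 vξ : NNReal) (hv0 : (v0 : ℝ) = 1 / (1 + κ))
    (hvξ : (vξ : ℝ) = (1 - Real.exp (-2 * (1 + κ) * Δ)) / (1 + κ))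
    (hX0law : μ.map X0 = gaussianReal 0 v0)
    (hξlaw : μ.map ξ = gaussianReal 0 vξ)
    (XΔ : Ω → ℝ) (hXΔ : ∀ ω, XΔ ω = Real.exp (-(1 + κ) * Δ) * X0 ω + ξ ω) :
    ((∫ ω, Δ * Real.exp (-(1 + κ) * Δ) * (X0 ω) ^ 2 ∂μ) ^ 2)⁻¹ *
      ∫ ω, (X0 ω) ^ 2 * ((XΔ ω) ^ 2 - Real.exp (-2 * (1 + κ) * Δ) * (X0 ω) ^ 2) ∂μ
      = (Real.exp (2 * (1 + κ) * Δ) - 1) / Δ ^ 2 :=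
  stmt5_general μ κ Δ hκ X0 ξ hmX0 hmξ hindep v0 vξ hv0 hvξ hX0law hξlaw XΔ hXΔ
end

section
/- Let G : Θ → ℝ^p be C¹ on a compact set Θ ⊂ ℝ^p, and let (G_N)_{N≥1} be C¹ functions converging to G uniformly on Θ together with their Jacobians H_N → H uniformly. Suppose θ₀ ∈ interior(Θ) satisfies G(θ₀) = 0 and det H(θ₀) ≠ 0, and that θ₀ is the unique zero of G in some closed ball B̄_ε(θ₀) ⊂ Θ. Then there exist N₀ and a constant C such that for all N > N₀ there exists θ_N ∈ B_ε(θ₀) with G_N(θ_N) = 0, det H_N(θ_N) ≠ 0, and ‖θ_N − θ₀‖ ≤ C ‖G_N(θ_N) − G(θ_N)‖ ≤ C sup_{θ∈Θ}‖G_N(θ) − G(θ)‖. -/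
/-!
Write `L = H(θ₀)` and `c = ‖L⁻¹‖⁻¹ / 2`. By continuity of `H` at `θ₀` and uniform convergence of
`H_N`, on a small closed ball around `θ₀` the Jacobians of both `G` and `G_N` stay within `c` of
`L`, so by the mean value inequality both maps approximate `L` there in the sense of
`ApproximatesLinearOn`. The surjectivity half of the inverse function theorem then yields a zero
`θ_N` of `G_N` in the ball as soon as `‖G_N(θ₀)‖ = ‖G_N(θ₀) - G(θ₀)‖` is small, and the
antilipschitz bound for `G` gives `‖θ_N - θ₀‖ ≤ 2‖L⁻¹‖ ‖G(θ_N) - G(θ₀)‖`, where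
`G(θ_N) - G(θ₀) = G(θ_N) - G_N(θ_N)`. Since `H_N(θ_N)` is within `c < ‖L⁻¹‖⁻¹` of `L`, it is
injective, hence has nonzero determinant.
-/

open Metric NNReal Filter Set

theorem Convex.approximatesLinearOn_of_norm_sub_le {E F : Type*} [NormedAddCommGroup E]
    [NormedSpace ℝ E] [NormedAddCommGroup F] [NormedSpace ℝ F] {f : E → F}
    {f' : E → E →L[ℝ] F} {φ : E →L[ℝ] F} {s : Set E} {c : ℝ≥0} (hs : Convex ℝ s)
    (hf : ∀ x ∈ s, HasFDerivWithinAt f (f' x) s x) (hf' : ∀ x ∈ s, ‖f' x - φ‖ ≤ c) :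
    ApproximatesLinearOn f φ s c :=
  ApproximatesLinearOn.approximatesLinearOn_iff_lipschitzOnWith.2 <|
    hs.lipschitzOnWith_of_nnnorm_hasFDerivWithin_le
      (fun x hx => (hf x hx).sub φ.hasFDerivWithinAt) hf'

section NormedField

variable {𝕜 : Type*} [NontriviallyNormedField 𝕜]
  {E : Type*} [NormedAddCommGroup E] [NormedSpace 𝕜 E]
  {F : Type*} [NormedAddCommGroup F] [NormedSpace 𝕜 F]

theorem ContinuousLinearMap.det_ne_zero_of_nnnorm_sub_lt [FiniteDimensional 𝕜 E]
    {A : E →L[𝕜] E} {L : E ≃L[𝕜] E} (h : ‖A - L‖₊ < ‖(L.symm : E →L[𝕜] E)‖₊⁻¹) :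
    A.det ≠ 0 := by
  have hA : ApproximatesLinearOn A (L : E →L[𝕜] E) univ ‖A - L‖₊ :=
    ApproximatesLinearOn.approximatesLinearOn_iff_lipschitzOnWith.2
      (A - L).lipschitz.lipschitzOnWith
  have hinj : Function.Injective A := injOn_univ.1 (hA.injOn (Or.inr h))
  exact fun hdet => LinearMap.det_eq_zero_iff_ker_ne_bot.1 hdet (LinearMap.ker_eq_bot.2 hinj)

theorem ApproximatesLinearOn.exists_eq_zero_norm_sub_le [CompleteSpace E] {f g : E → F}
    {L : E ≃L[𝕜] F} {c : ℝ≥0} {x₀ : E} {r : ℝ}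
    (hf : ApproximatesLinearOn f (L : E →L[𝕜] F) (closedBall x₀ r) c)
    (hg : ApproximatesLinearOn g (L : E →L[𝕜] F) (closedBall x₀ r) c)
    (hc : Subsingleton E ∨ c < ‖(L.symm : F →L[𝕜] E)‖₊⁻¹) (hr : 0 ≤ r) (hgx₀ : g x₀ = 0)
    (hfx₀ : ‖f x₀‖ ≤ ((‖(L.symm : F →L[𝕜] E)‖₊ : ℝ)⁻¹ - c) * r) :
    ∃ x ∈ closedBall x₀ r, f x = 0 ∧
      ‖x - x₀‖ ≤ (‖(L.symm : F →L[𝕜] E)‖₊⁻¹ - c)⁻¹ * ‖f x - g x‖ := by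
  have h0 : (0 : F) ∈ closedBall (f x₀) ((L.toNonlinearRightInverse.nnnorm⁻¹ - c) * r) := by
    rwa [mem_closedBall, dist_zero_left]
  obtain ⟨x, hx, hfx⟩ :=
    hf.surjOn_closedBall_of_nonlinearRightInverse L.toNonlinearRightInverse hr subset_rfl h0
  refine ⟨x, hx, hfx, ?_⟩
  have := (hg.antilipschitz hc).le_mul_dist ⟨x, hx⟩ ⟨x₀, mem_closedBall_self hr⟩
  simpa [Subtype.dist_eq, dist_eq_norm, hgx₀, hfx] using this

end NormedField

section FiniteDimensional

variable {E : Type*} [NormedAddCommGroup E] [NormedSpace ℝ E] [FiniteDimensional ℝ E]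

theorem exists_eq_zero_of_norm_fderiv_sub_lt {f g : E → E} {f' g' : E → E →L[ℝ] E}
    {L : E ≃L[ℝ] E} {c : ℝ≥0} {x₀ : E} {r : ℝ} (hr : 0 ≤ r)
    (hf : ∀ x ∈ closedBall x₀ r, HasFDerivAt f (f' x) x)
    (hg : ∀ x ∈ closedBall x₀ r, HasFDerivAt g (g' x) x)
    (hf' : ∀ x ∈ closedBall x₀ r, ‖f' x - L‖ < c) (hg' : ∀ x ∈ closedBall x₀ r, ‖g' x - L‖ ≤ c)
    (hc : c < ‖(L.symm : E →L[ℝ] E)‖₊⁻¹) (hgx₀ : g x₀ = 0)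
    (hfx₀ : ‖f x₀‖ ≤ ((‖(L.symm : E →L[ℝ] E)‖₊ : ℝ)⁻¹ - c) * r) :
    ∃ x ∈ closedBall x₀ r, f x = 0 ∧ (f' x).det ≠ 0 ∧
      ‖x - x₀‖ ≤ (‖(L.symm : E →L[ℝ] E)‖₊⁻¹ - c)⁻¹ * ‖f x - g x‖ := by
  have happrox : ∀ {φ : E → E} {φ' : E → E →L[ℝ] E},
      (∀ x ∈ closedBall x₀ r, HasFDerivAt φ (φ' x) x) → (∀ x ∈ closedBall x₀ r, ‖φ' x - L‖ ≤ c) →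
      ApproximatesLinearOn φ (L : E →L[ℝ] E) (closedBall x₀ r) c := fun hφ hφ' =>
    (convex_closedBall x₀ r).approximatesLinearOn_of_norm_sub_le
      (fun x hx => (hφ x hx).hasFDerivWithinAt) hφ'
  obtain ⟨x, hx, hfx, hxx₀⟩ := ApproximatesLinearOn.exists_eq_zero_norm_sub_le
    (happrox hf fun x hx => (hf' x hx).le) (happrox hg hg') (Or.inr hc) hr hgx₀ hfx₀
  exact ⟨x, hx, hfx, ContinuousLinearMap.det_ne_zero_of_nnnorm_sub_lt ((hf' x hx).trans hc),
    hxx₀⟩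

theorem eventually_exists_eq_zero_of_tendstoUniformlyOn [Nontrivial E] {ι : Type*}
    {l : Filter ι} {s : Set E} {f : ι → E → E} {g : E → E}
    (hf : ∀ i, ContDiffOn ℝ 1 (f i) s) (hg : ContDiffOn ℝ 1 g s)
    (hfg : TendstoUniformlyOn f g l s)
    (hfg' : TendstoUniformlyOn (fun i x => fderiv ℝ (f i) x) (fderiv ℝ g) l s)
    {x₀ : E} (hx₀ : x₀ ∈ interior s) (hgx₀ : g x₀ = 0) (hdet : (fderiv ℝ g x₀).det ≠ 0)
    {ε : ℝ} (hε : 0 < ε) :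
    ∃ C > 0, ∀ᶠ i in l, ∃ x ∈ ball x₀ ε, f i x = 0 ∧ (fderiv ℝ (f i) x).det ≠ 0 ∧
      ‖x - x₀‖ ≤ C * ‖f i x - g x‖ := by
  set L := (fderiv ℝ g x₀).toContinuousLinearEquivOfDetNeZero hdet
  set N := ‖(L.symm : E →L[ℝ] E)‖₊
  set c := N⁻¹ / 2
  have hN : 0 < N := L.subsingleton_or_nnnorm_symm_pos.resolve_left (not_subsingleton E)
  have hc : 0 < c := half_pos (inv_pos.2 hN)
  have hcN : c < N⁻¹ := NNReal.half_lt_self (inv_pos.2 hN).ne'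
  have hdiff : ∀ {φ : E → E}, ContDiffOn ℝ 1 φ s → ∀ x ∈ interior s,
      HasFDerivAt φ (fderiv ℝ φ x) x := fun hφ x hx =>
    ((hφ.contDiffAt (mem_interior_iff_mem_nhds.1 hx)).differentiableAt one_ne_zero).hasFDerivAt
  have hcont : ContinuousAt (fderiv ℝ g) x₀ :=
    (hg.contDiffAt (mem_interior_iff_mem_nhds.1 hx₀)).continuousAt_fderiv one_ne_zero
  obtain ⟨r, hr, hrsub⟩ := nhds_basis_closedBall.mem_iff.1 <|
    inter_mem (inter_mem (ball_mem_nhds x₀ hε) (isOpen_interior.mem_nhds hx₀))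
      (hcont.preimage_mem_nhds (ball_mem_nhds _ (half_pos hc)))
  have hgL : ∀ x ∈ closedBall x₀ r, ‖fderiv ℝ g x - L‖ < c / 2 := fun x hx => by
    simpa [L, dist_eq_norm] using (hrsub hx).2
  refine ⟨((N⁻¹ - c)⁻¹ : ℝ≥0), NNReal.coe_pos.2 (inv_pos.2 (tsub_pos_of_lt hcN)), ?_⟩
  filter_upwards [Metric.tendstoUniformlyOn_iff.1 hfg _ (mul_pos (sub_pos.2 hcN) hr),
    Metric.tendstoUniformlyOn_iff.1 hfg' _ (half_pos hc)] with i hfi hf'i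
  have hfL : ∀ x ∈ closedBall x₀ r, ‖fderiv ℝ (f i) x - L‖ < c := fun x hx => by
    have hfg'x := hf'i x (interior_subset (hrsub hx).1.2)
    rw [dist_eq_norm'] at hfg'x
    calc ‖fderiv ℝ (f i) x - L‖
        ≤ ‖fderiv ℝ (f i) x - fderiv ℝ g x‖ + ‖fderiv ℝ g x - L‖ :=
          norm_sub_le_norm_sub_add_norm_sub _ _ _
      _ < c / 2 + c / 2 := add_lt_add hfg'x (hgL x hx)
      _ = c := add_halves _
  have hfx₀ := hfi x₀ (interior_subset hx₀)
  rw [hgx₀, dist_zero_left] at hfx₀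
  obtain ⟨x, hx, hfx, hdetx, hxx₀⟩ := exists_eq_zero_of_norm_fderiv_sub_lt hr.le
    (fun x hx => hdiff (hf i) x (hrsub hx).1.2) (fun x hx => hdiff hg x (hrsub hx).1.2) hfL
    (fun x hx => (hgL x hx).le.trans (half_le_self c.2)) hcN hgx₀ hfx₀.le
  exact ⟨x, (hrsub hx).1.1, hfx, hdetx, hxx₀⟩

end FiniteDimensional

theorem stmt10_general {p : ℕ}
    (Θ : Set (EuclideanSpace ℝ (Fin p)))
    (hΘ : IsCompact Θ)
    (G : EuclideanSpace ℝ (Fin p) → EuclideanSpace ℝ (Fin p))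
    (GN : ℕ → EuclideanSpace ℝ (Fin p) → EuclideanSpace ℝ (Fin p))
    (hG : ContDiffOn ℝ 1 G Θ) (hGN : ∀ N, ContDiffOn ℝ 1 (GN N) Θ)
    (hGconv : TendstoUniformlyOn GN G Filter.atTop Θ)
    (hHconv : TendstoUniformlyOn (fun N θ => fderiv ℝ (GN N) θ) (fun θ => fderiv ℝ G θ)
      Filter.atTop Θ)
    (θ₀ : EuclideanSpace ℝ (Fin p)) (hθ₀ : θ₀ ∈ interior Θ)
    (hGθ₀ : G θ₀ = 0) (hdet : (fderiv ℝ G θ₀).det ≠ 0)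
    (ε : ℝ) (hε : 0 < ε) (hball : closedBall θ₀ ε ⊆ Θ) :
    ∃ (N₀ : ℕ) (C : ℝ), 0 < C ∧ ∀ N > N₀, ∃ θN ∈ ball θ₀ ε,
      GN N θN = 0 ∧ (fderiv ℝ (GN N) θN).det ≠ 0 ∧
      ‖θN - θ₀‖ ≤ C * ‖GN N θN - G θN‖ ∧
      C * ‖GN N θN - G θN‖ ≤ C * sSup ((fun θ => ‖GN N θ - G θ‖) '' Θ) := by
  obtain ⟨N₀, C, hC, hzeros⟩ : ∃ (N₀ : ℕ) (C : ℝ), 0 < C ∧ ∀ N ≥ N₀, ∃ θN ∈ ball θ₀ ε,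
      GN N θN = 0 ∧ (fderiv ℝ (GN N) θN).det ≠ 0 ∧ ‖θN - θ₀‖ ≤ C * ‖GN N θN - G θN‖ := by
    rcases subsingleton_or_nontrivial (EuclideanSpace ℝ (Fin p)) with hE | hE
    · refine ⟨0, 1, one_pos, fun N _ => ⟨θ₀, mem_ball_self hε, Subsingleton.elim _ _, ?_, by simp⟩⟩
      simp [ContinuousLinearMap.det, LinearMap.det_eq_one_of_subsingleton]
    · obtain ⟨C, hC, h⟩ := eventually_exists_eq_zero_of_tendstoUniformlyOn hGN hG hGconv hHconv
        hθ₀ hGθ₀ hdet hε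
      obtain ⟨N₀, hN₀⟩ := eventually_atTop.1 h
      exact ⟨N₀, C, hC, hN₀⟩
  refine ⟨N₀, C, hC, fun N hN => ?_⟩
  obtain ⟨θN, hθN, hzero, hdetN, hbound⟩ := hzeros N hN.le
  have hbdd : BddAbove ((fun θ => ‖GN N θ - G θ‖) '' Θ) :=
    (hΘ.image_of_continuousOn ((hGN N).continuousOn.sub hG.continuousOn).norm).bddAbove
  exact ⟨θN, hθN, hzero, hdetN, hbound, mul_le_mul_of_nonneg_left
    (le_csSup hbdd (mem_image_of_mem _ (hball (ball_subset_closedBall hθN)))) hC.le⟩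

/-- Deterministic core of Lemma 4.4: existence and quantitative convergence of zeros of the
perturbed estimating functions G_N towards the zero θ₀ of the limiting function G. -/
theorem stmt10 {p : ℕ}
    (Θ : Set (EuclideanSpace ℝ (Fin p)))
    (hΘ : IsCompact Θ)
    (G : EuclideanSpace ℝ (Fin p) → EuclideanSpace ℝ (Fin p))
    (GN : ℕ → EuclideanSpace ℝ (Fin p) → EuclideanSpace ℝ (Fin p))
    (hG : ContDiffOn ℝ 1 G Θ) (hGN : ∀ N, ContDiffOn ℝ 1 (GN N) Θ)
    (hGconv : TendstoUniformlyOn GN G Filter.atTop Θ)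
    (hHconv : TendstoUniformlyOn (fun N θ => fderiv ℝ (GN N) θ) (fun θ => fderiv ℝ G θ)
      Filter.atTop Θ)
    (θ₀ : EuclideanSpace ℝ (Fin p)) (hθ₀ : θ₀ ∈ interior Θ)
    (hGθ₀ : G θ₀ = 0) (hdet : (fderiv ℝ G θ₀).det ≠ 0)
    (ε : ℝ) (hε : 0 < ε) (hball : closedBall θ₀ ε ⊆ Θ)
    (huniq : ∀ θ ∈ closedBall θ₀ ε, G θ = 0 → θ = θ₀) :
    ∃ (N₀ : ℕ) (C : ℝ), 0 < C ∧ ∀ N > N₀, ∃ θN ∈ ball θ₀ ε,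
      GN N θN = 0 ∧ (fderiv ℝ (GN N) θN).det ≠ 0 ∧
      ‖θN - θ₀‖ ≤ C * ‖GN N θN - G θN‖ ∧
      C * ‖GN N θN - G θN‖ ≤ C * sSup ((fun θ => ‖GN N θ - G θ‖) '' Θ) :=
  stmt10_general Θ hΘ G GN hG hGN hGconv hHconv θ₀ hθ₀ hGθ₀ hdet ε hε hball
end
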